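/- For all bounded measurable functions f, g : Σ_d → ℝ with |g|_δ < ∞ and every i ∈ ℕ, one has |∫ (f∘σ^i)·g dλ − (∫ f dλ)·(∫ g dλ)| ≤ ‖f‖_∞ · |g|_δ · δ^i. -/

import Mathlib

open MeasureTheory

noncomputable section

/-- The shift `σ` on `Σ_d = {0,…,d−1}^{ℕ*}` (sequences written `0`-indexed). -/
def shiftSigma (d : ℕ) (x : ℕ → Fin d) : ℕ → Fin d := fun j => x (j + 1)

/-- The cylinder `[w]` of sequences beginning with the word `w` of length `n`. -/
def cylSet (d n : ℕ) (w : Fin n → Fin d) : Set (ℕ → Fin d) :=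
  {x | ∀ i : Fin n, x (i : ℕ) = w i}

/-- `osc(g,B) = sup{|g(x)−g(y)| : x,y ∈ B}`. -/
def oscOn {d : ℕ} (g : (ℕ → Fin d) → ℝ) (B : Set (ℕ → Fin d)) : ℝ :=
  sSup {r : ℝ | ∃ x ∈ B, ∃ y ∈ B, r = |g x - g y|}

/-- The `n`-th term `δ^{-n} Σ_{|w|=n} osc(g,[w])·d^{-n}` of the `δ`-oscillation seminorm
`|g|_δ = sup_n (δ^{-n} Σ_{|w|=n} osc(g,[w])·d^{-n})`. -/
def oscTerm (d : ℕ) (δ : ℝ) (g : (ℕ → Fin d) → ℝ) (n : ℕ) : ℝ :=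
  δ ^ (-(n : ℤ)) * ∑ w : Fin n → Fin d, oscOn g (cylSet d n w) * (d : ℝ) ^ (-(n : ℤ))

/-! Cut `Σ_d` into the `d^i` cylinders `[w]` with `|w| = i`. Since `σ^i` pushes `λ` restricted
to `[w]` forward to `d^{-i} λ`, on `[w]` the function `f ∘ σ^i` integrates against a constant
`c` to `d^{-i} c ∫ f`. Taking for `c` the average of `g` over `[w]`, the contribution of `[w]`
to the correlation is `∫_[w] (f ∘ σ^i) (g - c)`, of size at most
`‖f‖_∞ osc(g, [w]) d^{-i}`; the sum of these bounds over `w` is `‖f‖_∞ δ^i` times the `i`-th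
term of `|g|_δ`. -/

open scoped ENNReal

section Cylinders

variable {d : ℕ}

theorem shiftSigma_iterate_apply (i : ℕ) (x : ℕ → Fin d) (j : ℕ) :
    (shiftSigma d)^[i] x j = x (j + i) := by
  induction i generalizing x with
  | zero => rfl
  | succ i ih => rw [Function.iterate_succ_apply, ih]; rfl

theorem measurable_shiftSigma_iterate (i : ℕ) : Measurable (shiftSigma d)^[i] :=
  (measurable_pi_lambda _ fun j => measurable_pi_apply (j + 1)).iterate i

theorem cylSet_eq_preimage (n : ℕ) (w : Fin n → Fin d) :
    cylSet d n w = (fun x (k : Fin n) => x k) ⁻¹' {w} := by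
  ext x
  simp [cylSet, funext_iff]

theorem measurableSet_cylSet (n : ℕ) (w : Fin n → Fin d) : MeasurableSet (cylSet d n w) := by
  rw [cylSet_eq_preimage]
  exact measurable_pi_lambda _ (fun k => measurable_pi_apply _) (measurableSet_singleton w)

theorem pairwise_disjoint_cylSet (n : ℕ) : Pairwise (Function.onFun Disjoint (cylSet d n)) := by
  intro w v hwv
  simp only [Function.onFun, cylSet_eq_preimage]
  exact (Set.disjoint_singleton.2 hwv).preimage _

theorem iUnion_cylSet (n : ℕ) : ⋃ w, cylSet d n w = Set.univ :=
  Set.eq_univ_of_forall fun x => Set.mem_iUnion.2 ⟨fun k => x k, fun _ => rfl⟩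

theorem cylSet_zero (w : Fin 0 → Fin d) : cylSet d 0 w = Set.univ :=
  Set.eq_univ_of_forall fun _ k => k.elim0

theorem mem_cylSet_iff_of_mem {n : ℕ} {w : Fin n → Fin d} {x y : ℕ → Fin d}
    (hx : x ∈ cylSet d n w) : y ∈ cylSet d n w ↔ ∀ k < n, y k = x k :=
  ⟨fun hy k hk => (hy ⟨k, hk⟩).trans (hx ⟨k, hk⟩).symm, fun hy k => (hy k k.isLt).trans (hx k)⟩

def cylinders (d : ℕ) : Set (Set (ℕ → Fin d)) :=
  {s | ∃ n w, s = cylSet d n w}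

theorem isPiSystem_cylinders : IsPiSystem (cylinders d) := by
  rintro _ ⟨n, w, rfl⟩ _ ⟨m, v, rfl⟩ ⟨x, hxw, hxv⟩
  have hx : x ∈ cylSet d (max n m) fun k => x k := fun _ => rfl
  refine ⟨max n m, fun k => x k, Set.ext fun y => ?_⟩
  simp only [Set.mem_inter_iff, mem_cylSet_iff_of_mem hxw, mem_cylSet_iff_of_mem hxv,
    mem_cylSet_iff_of_mem hx, lt_max_iff]
  grind

theorem generateFrom_cylinders :
    MeasurableSpace.generateFrom (cylinders d) = MeasurableSpace.pi := by
  refine le_antisymm (MeasurableSpace.generateFrom_le ?_) ?_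
  · rintro _ ⟨n, w, rfl⟩
    exact measurableSet_cylSet n w
  · refine iSup_le fun j => measurable_iff_comap_le.1
      (@measurable_to_countable' _ _ _ _ (.generateFrom (cylinders d)) _ fun a => ?_)
    have hpre : (fun x : ℕ → Fin d => x j) ⁻¹' {a} =
        ⋃ (v : Fin (j + 1) → Fin d) (_ : v (Fin.last j) = a), cylSet d (j + 1) v := by
      ext x
      simp [cylSet_eq_preimage]
    rw [hpre]
    exact .iUnion fun v => .iUnion fun _ =>
      MeasurableSpace.measurableSet_generateFrom ⟨j + 1, v, rfl⟩

theorem shiftSigma_iterate_preimage_inter_cylSet (i m : ℕ) (w : Fin i → Fin d)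
    (v : Fin m → Fin d) :
    (shiftSigma d)^[i] ⁻¹' cylSet d m v ∩ cylSet d i w = cylSet d (i + m) (Fin.append w v) := by
  ext x
  simp only [Set.mem_inter_iff, Set.mem_preimage, cylSet, Set.mem_ofPred_eq,
    shiftSigma_iterate_apply, Fin.forall_fin_add, Fin.append_left, Fin.append_right,
    Fin.val_castAdd, Fin.val_natAdd, add_comm _ i]
  exact and_comm

end Cylinders

section Average

variable {α : Type*} [MeasurableSpace α] {μ : Measure α} {s : Set α}

theorem abs_sub_setAverage_le {G : α → ℝ} {ε : ℝ} {x : α} (hμs0 : μ s ≠ 0) (hμs : μ s ≠ ∞)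
    (hG : IntegrableOn G s μ) (hGε : ∀ y ∈ s, |G x - G y| ≤ ε) :
    |G x - ⨍ y in s, G y ∂μ| ≤ ε := by
  have hm : 0 < μ.real s := ENNReal.toReal_pos hμs0 hμs
  have hint : ∫ y in s, (G x - G y) ∂μ = μ.real s * (G x - ⨍ y in s, G y ∂μ) := by
    rw [integral_sub (integrableOn_const (C := G x) hμs) hG, setIntegral_const, setAverage_eq,
      smul_eq_mul, smul_eq_mul, mul_sub, mul_inv_cancel_left₀ hm.ne']
  have hle : ‖∫ y in s, (G x - G y) ∂μ‖ ≤ ε * μ.real s :=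
    norm_setIntegral_le_of_norm_le_const hμs.lt_top hGε
  rw [hint, Real.norm_eq_abs, abs_mul, abs_of_pos hm, mul_comm ε] at hle
  exact le_of_mul_le_mul_left hle hm

theorem abs_setIntegral_mul_sub_mul_setAverage_le {F G : α → ℝ} {S ε : ℝ}
    (hs : MeasurableSet s) (hμs0 : μ s ≠ 0) (hμs : μ s ≠ ∞) (hF : IntegrableOn F s μ)
    (hG : IntegrableOn G s μ) (hFS : ∀ x ∈ s, |F x| ≤ S)
    (hGε : ∀ x ∈ s, ∀ y ∈ s, |G x - G y| ≤ ε) :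
    |∫ x in s, F x * G x ∂μ - (∫ x in s, F x ∂μ) * ⨍ x in s, G x ∂μ| ≤ S * ε * μ.real s := by
  set c := ⨍ x in s, G x ∂μ
  have hFG : IntegrableOn (fun x => F x * G x) s μ :=
    hG.bdd_mul hF.aestronglyMeasurable (ae_restrict_of_forall_mem hs hFS)
  have hsplit : ∫ x in s, F x * G x ∂μ - (∫ x in s, F x ∂μ) * c
      = ∫ x in s, F x * (G x - c) ∂μ := by
    simp only [mul_sub]
    rw [integral_sub hFG (hF.mul_const c), integral_mul_const]
  rw [hsplit, ← Real.norm_eq_abs]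
  refine norm_setIntegral_le_of_norm_le_const hμs.lt_top fun x hx => ?_
  rw [Real.norm_eq_abs, abs_mul]
  exact mul_le_mul (hFS x hx) (abs_sub_setAverage_le hμs0 hμs hG (hGε x hx)) (abs_nonneg _)
    ((abs_nonneg _).trans (hFS x hx))

end Average

section Bernoulli

variable {d : ℕ}

def IsUniformBernoulli (lam : Measure (ℕ → Fin d)) : Prop :=
  ∀ (n : ℕ) (w : Fin n → Fin d), lam (cylSet d n w) = ((d : ℝ≥0∞))⁻¹ ^ n

variable {lam : Measure (ℕ → Fin d)}

theorem IsUniformBernoulli.measureReal_cylSet (hlam : IsUniformBernoulli lam) (n : ℕ)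
    (w : Fin n → Fin d) : lam.real (cylSet d n w) = (d : ℝ)⁻¹ ^ n := by
  simp [measureReal_def, hlam n w, ENNReal.toReal_pow, ENNReal.toReal_inv]

theorem integral_eq_sum_setIntegral_cylSet {h : (ℕ → Fin d) → ℝ} (hh : Integrable h lam)
    (n : ℕ) : ∫ x, h x ∂lam = ∑ w : Fin n → Fin d, ∫ x in cylSet d n w, h x ∂lam := by
  rw [← integral_iUnion_fintype (measurableSet_cylSet n) (pairwise_disjoint_cylSet n)
    fun _ => hh.integrableOn, iUnion_cylSet, setIntegral_univ]

variable [IsFiniteMeasure lam]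

theorem IsUniformBernoulli.map_shiftSigma_iterate_restrict_cylSet
    (hlam : IsUniformBernoulli lam) (i : ℕ) (w : Fin i → Fin d) :
    (lam.restrict (cylSet d i w)).map (shiftSigma d)^[i] = (d : ℝ≥0∞)⁻¹ ^ i • lam := by
  have hcyl : ∀ m (v : Fin m → Fin d), (lam.restrict (cylSet d i w)).map (shiftSigma d)^[i]
      (cylSet d m v) = ((d : ℝ≥0∞)⁻¹ ^ i • lam) (cylSet d m v) := fun m v => by
    rw [Measure.map_apply (measurable_shiftSigma_iterate i) (measurableSet_cylSet m v),
      Measure.restrict_apply (measurable_shiftSigma_iterate i (measurableSet_cylSet m v)),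
      shiftSigma_iterate_preimage_inter_cylSet, Measure.smul_apply, hlam, hlam, smul_eq_mul,
      pow_add]
  refine ext_of_generate_finite (cylinders d) generateFrom_cylinders.symm isPiSystem_cylinders
    ?_ ?_
  · rintro _ ⟨m, v, rfl⟩
    exact hcyl m v
  · simpa only [cylSet_zero] using hcyl 0 Fin.elim0

theorem IsUniformBernoulli.setIntegral_cylSet_comp_shiftSigma_iterate
    (hlam : IsUniformBernoulli lam) (i : ℕ) (w : Fin i → Fin d) {f : (ℕ → Fin d) → ℝ}
    (hf : Measurable f) :
    ∫ x in cylSet d i w, f ((shiftSigma d)^[i] x) ∂lam = (d : ℝ)⁻¹ ^ i * ∫ x, f x ∂lam := by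
  rw [← integral_map (measurable_shiftSigma_iterate i).aemeasurable hf.aestronglyMeasurable,
    hlam.map_shiftSigma_iterate_restrict_cylSet, integral_smul_measure]
  simp [ENNReal.toReal_pow, ENNReal.toReal_inv]

end Bernoulli

section Oscillation

variable {d : ℕ}

theorem abs_sub_le_oscOn {g : (ℕ → Fin d) → ℝ} (hg : ∃ C, ∀ x, |g x| ≤ C)
    {B : Set (ℕ → Fin d)} {x y : ℕ → Fin d} (hx : x ∈ B) (hy : y ∈ B) :
    |g x - g y| ≤ oscOn g B := by
  obtain ⟨C, hC⟩ := hg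
  refine le_csSup ⟨C + C, ?_⟩ ⟨x, hx, y, hy, rfl⟩
  rintro _ ⟨x, -, y, -, rfl⟩
  exact (abs_sub _ _).trans (add_le_add (hC x) (hC y))

theorem sum_oscOn_cylSet_mul_eq_pow_mul_oscTerm {δ : ℝ} (hδ : δ ≠ 0)
    (g : (ℕ → Fin d) → ℝ) (n : ℕ) :
    ∑ w : Fin n → Fin d, oscOn g (cylSet d n w) * (d : ℝ)⁻¹ ^ n = δ ^ n * oscTerm d δ g n := by
  simp only [oscTerm, zpow_neg, zpow_natCast, inv_pow]
  rw [mul_inv_cancel_left₀ (pow_ne_zero n hδ)]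

end Oscillation

section Correlation

variable {d : ℕ} {lam : Measure (ℕ → Fin d)} [IsFiniteMeasure lam] {f g : (ℕ → Fin d) → ℝ}
  {S : ℝ}

theorem IsUniformBernoulli.abs_setIntegral_cylSet_sub_le (hlam : IsUniformBernoulli lam)
    (hd : d ≠ 0) (hf : Measurable f) (hg : Measurable g) (hfS : ∀ x, |f x| ≤ S)
    (hgb : ∃ C, ∀ x, |g x| ≤ C) (i : ℕ) (w : Fin i → Fin d) :
    |∫ x in cylSet d i w, f ((shiftSigma d)^[i] x) * g x ∂lam
        - (∫ x, f x ∂lam) * ∫ x in cylSet d i w, g x ∂lam|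
      ≤ S * oscOn g (cylSet d i w) * (d : ℝ)⁻¹ ^ i := by
  obtain ⟨C, hC⟩ := hgb
  have hfσ : Integrable (fun x => f ((shiftSigma d)^[i] x)) lam :=
    .of_bound (hf.comp (measurable_shiftSigma_iterate i)).aestronglyMeasurable S
      (.of_forall fun _ => hfS _)
  have hgi : Integrable g lam := .of_bound hg.aestronglyMeasurable C (.of_forall hC)
  have hμs0 : lam (cylSet d i w) ≠ 0 := by
    rw [hlam]
    exact pow_ne_zero _ (ENNReal.inv_ne_zero.2 (ENNReal.natCast_ne_top d))
  have hdi : (d : ℝ)⁻¹ ^ i ≠ 0 := by positivity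
  have key := abs_setIntegral_mul_sub_mul_setAverage_le (measurableSet_cylSet i w) hμs0
    (measure_ne_top _ _) hfσ.integrableOn hgi.integrableOn (fun x _ => hfS _)
    (fun x hx y hy => abs_sub_le_oscOn ⟨C, hC⟩ hx hy)
  rwa [hlam.setIntegral_cylSet_comp_shiftSigma_iterate i w hf, setAverage_eq,
    hlam.measureReal_cylSet, smul_eq_mul, mul_mul_mul_comm, mul_inv_cancel₀ hdi, one_mul] at key

theorem IsUniformBernoulli.abs_integral_comp_shiftSigma_iterate_mul_sub_le
    (hlam : IsUniformBernoulli lam) (hd : d ≠ 0) (hf : Measurable f) (hg : Measurable g)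
    (hfS : ∀ x, |f x| ≤ S) (hgb : ∃ C, ∀ x, |g x| ≤ C) (i : ℕ) :
    |∫ x, f ((shiftSigma d)^[i] x) * g x ∂lam - (∫ x, f x ∂lam) * ∫ x, g x ∂lam|
      ≤ S * ∑ w : Fin i → Fin d, oscOn g (cylSet d i w) * (d : ℝ)⁻¹ ^ i := by
  obtain ⟨C, hC⟩ := hgb
  have hgi : Integrable g lam := .of_bound hg.aestronglyMeasurable C (.of_forall hC)
  have hfgi : Integrable (fun x => f ((shiftSigma d)^[i] x) * g x) lam :=
    hgi.bdd_mul (hf.comp (measurable_shiftSigma_iterate i)).aestronglyMeasurable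
      (.of_forall fun _ => hfS _)
  rw [integral_eq_sum_setIntegral_cylSet hfgi i, integral_eq_sum_setIntegral_cylSet hgi i,
    Finset.mul_sum, ← Finset.sum_sub_distrib, Finset.mul_sum]
  refine (Finset.abs_sum_le_sum_abs _ _).trans (Finset.sum_le_sum fun w _ => ?_)
  rw [← mul_assoc]
  exact hlam.abs_setIntegral_cylSet_sub_le hd hf hg hfS ⟨C, hC⟩ i w

end Correlation

theorem correlation_decay_shift (d : ℕ) (hd : 2 ≤ d)
    (δ : ℝ) (hδ₀ : 0 < δ)
    (lam : Measure (ℕ → Fin d)) [IsProbabilityMeasure lam]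
    (hlam : ∀ (n : ℕ) (w : Fin n → Fin d), lam (cylSet d n w) = ((d : ENNReal))⁻¹ ^ n)
    (f g : (ℕ → Fin d) → ℝ) (hf : Measurable f) (hg : Measurable g)
    (hfb : ∃ C : ℝ, ∀ x, |f x| ≤ C) (hgb : ∃ C : ℝ, ∀ x, |g x| ≤ C)
    (hgδ : BddAbove (Set.range (oscTerm d δ g)))
    (i : ℕ) :
    |(∫ x, f ((shiftSigma d)^[i] x) * g x ∂lam)
        - (∫ x, f x ∂lam) * (∫ x, g x ∂lam)|
      ≤ (⨆ x : ℕ → Fin d, |f x|) * (⨆ n : ℕ, oscTerm d δ g n) * δ ^ i := by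
  obtain ⟨C, hC⟩ := hfb
  have hfS : ∀ x, |f x| ≤ ⨆ x, |f x| := le_ciSup ⟨C, Set.forall_mem_range.2 hC⟩
  calc _ ≤ (⨆ x, |f x|) * ∑ w : Fin i → Fin d, oscOn g (cylSet d i w) * (d : ℝ)⁻¹ ^ i :=
        IsUniformBernoulli.abs_integral_comp_shiftSigma_iterate_mul_sub_le hlam (by omega)
          hf hg hfS hgb i
    _ = (⨆ x, |f x|) * (δ ^ i * oscTerm d δ g i) := by
        rw [sum_oscOn_cylSet_mul_eq_pow_mul_oscTerm hδ₀.ne']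
    _ ≤ (⨆ x, |f x|) * (δ ^ i * ⨆ n, oscTerm d δ g n) := by
        gcongr
        · exact Real.iSup_nonneg fun _ => abs_nonneg _
        · exact le_ciSup hgδ i
    _ = _ := by ring

end
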